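/- Let M be a PKS and let φ be an LTL formula. If [M ⊨₃ φ] = ⊥, then [M ⊨_T φ] = ⊥; that is, every completion M′ of M satisfies [M′ ⊨ φ] = ⊥ under classical LTL semantics. -/
import Mathlib


set_option autoImplicit false

open Classical

noncomputable section

/-- Three-valued truth values: `0` is false (⊥), `1` is unknown (?), `2` is true (⊤),
linearly ordered by the information ordering ⊥ < ? < ⊤. -/
abbrev TV : Type := Fin 3

namespace TV

/-- The truth value ⊥ (false). -/
def ff : TV := 0
/-- The truth value ? (unknown/maybe). -/
def uu : TV := 1
/-- The truth value ⊤ (true). -/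
def tt : TV := 2

/-- `comp` swaps ⊤ and ⊥ and fixes ?. -/
def comp : TV → TV
  | ⟨0, _⟩ => tt
  | ⟨1, _⟩ => uu
  | _ => ff

end TV

/-- LTL formulae over a set `A` of atomic propositions (with the standard
derived/dual operators: falsum, disjunction, release, globally). -/
inductive LTL (A : Type) : Type
  | fls : LTL A
  | atom (a : A) : LTL A
  | neg (φ : LTL A) : LTL A
  | conj (φ ψ : LTL A) : LTL A
  | disj (φ ψ : LTL A) : LTL A
  | next (φ : LTL A) : LTL A
  | untl (φ ψ : LTL A) : LTL A
  | release (φ ψ : LTL A) : LTL A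
  | glob (φ : LTL A) : LTL A

namespace LTL

/-- The atomic propositions occurring in a formula. -/
def atoms {A : Type} : LTL A → Set A
  | .fls => ∅
  | .atom a => {a}
  | .neg φ => φ.atoms
  | .conj φ ψ => φ.atoms ∪ ψ.atoms
  | .disj φ ψ => φ.atoms ∪ ψ.atoms
  | .next φ => φ.atoms
  | .untl φ ψ => φ.atoms ∪ ψ.atoms
  | .release φ ψ => φ.atoms ∪ ψ.atoms
  | .glob φ => φ.atoms

/-- Renaming of the atomic propositions of a formula. -/
def map {A B : Type} (f : A → B) : LTL A → LTL B
  | .fls => .fls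
  | .atom a => .atom (f a)
  | .neg φ => .neg (φ.map f)
  | .conj φ ψ => .conj (φ.map f) (ψ.map f)
  | .disj φ ψ => .disj (φ.map f) (ψ.map f)
  | .next φ => .next (φ.map f)
  | .untl φ ψ => .untl (φ.map f) (ψ.map f)
  | .release φ ψ => .release (φ.map f) (ψ.map f)
  | .glob φ => .glob (φ.map f)

end LTL

/-- A Partial Kripke Structure over state universe `St` and atomic-proposition
universe `A`: a set `S` of states, a left-total transition relation `R ⊆ S × S`,
a set `S0 ⊆ S` of initial states, a set `AP` of atomic propositions, and a
three-valued labeling. -/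
structure PKS (St A : Type) where
  S : Set St
  R : Set (St × St)
  S0 : Set St
  AP : Set A
  L : St → A → TV
  R_dom : ∀ p ∈ R, p.1 ∈ S ∧ p.2 ∈ S
  leftTotal : ∀ s ∈ S, ∃ s' ∈ S, (s, s') ∈ R
  S0_sub : S0 ⊆ S

/-- A Kripke Structure is a PKS whose labeling never takes the value `?`. -/
def IsKS {St A : Type} (M : PKS St A) : Prop :=
  ∀ s ∈ M.S, ∀ a ∈ M.AP, M.L s a ≠ TV.uu

/-- `Refinement M M'` says that `M'` is a refinement of `M` (written `M ⪯ M'`). -/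
def Refinement {St A : Type} (M M' : PKS St A) : Prop :=
  M'.S = M.S ∧ M'.R = M.R ∧ M'.S0 = M.S0 ∧ M'.AP = M.AP ∧
    ∀ s ∈ M.S, ∀ a ∈ M.AP,
      (M.L s a = TV.tt → M'.L s a = TV.tt) ∧ (M.L s a = TV.ff → M'.L s a = TV.ff)

/-- `M'` is a completion of `M` iff `M'` is a KS refining `M`. -/
def IsCompletion {St A : Type} (M M' : PKS St A) : Prop :=
  Refinement M M' ∧ IsKS M'

/-- `Revision M M'` says that `M'` is a revision of `M`, i.e. `AP ⊆ AP'`. -/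
def Revision {St A : Type} (M M' : PKS St A) : Prop :=
  M.AP ⊆ M'.AP

/-- The suffix `πᵏ` of an infinite sequence. -/
def shift {St : Type} (π : ℕ → St) (k : ℕ) : ℕ → St := fun n => π (n + k)

/-- `π` is a path: all consecutive pairs are transitions of `M`. -/
def IsPath {St A : Type} (M : PKS St A) (π : ℕ → St) : Prop :=
  ∀ i, (π i, π (i + 1)) ∈ M.R

/-- Three-valued LTL semantics `[(L, π) ⊨₃ φ]` of a formula on an infinite
sequence of states, w.r.t. a three-valued labeling `L`. -/
def sat3 {St A : Type} (L : St → A → TV) : LTL A → (ℕ → St) → TV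
  | .fls, _ => TV.ff
  | .atom a, π => L (π 0) a
  | .neg φ, π => TV.comp (sat3 L φ π)
  | .conj φ ψ, π => min (sat3 L φ π) (sat3 L ψ π)
  | .disj φ ψ, π => max (sat3 L φ π) (sat3 L ψ π)
  | .next φ, π => sat3 L φ (shift π 1)
  | .untl φ ψ, π =>
      ⨆ j : ℕ, min (⨅ i ∈ Finset.range j, sat3 L φ (shift π i)) (sat3 L ψ (shift π j))
  | .release φ ψ, π =>
      ⨅ j : ℕ, max (⨆ i ∈ Finset.range j, sat3 L φ (shift π i)) (sat3 L ψ (shift π j))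
  | .glob φ, π => ⨅ j : ℕ, sat3 L φ (shift π j)

/-- `[(M, s) ⊨₃ φ]`: minimum over all paths of `M` starting in `s`. -/
def stateSat3 {St A : Type} (M : PKS St A) (s : St) (φ : LTL A) : TV :=
  ⨅ π ∈ {π : ℕ → St | IsPath M π ∧ π 0 = s}, sat3 M.L φ π

/-- `[M ⊨₃ φ]`: minimum over all initial states. -/
def modelSat3 {St A : Type} (M : PKS St A) (φ : LTL A) : TV :=
  ⨅ s ∈ M.S0, stateSat3 M s φ

/-- Classical two-valued LTL satisfaction of a formula on an infinite sequence
of states (an atom holds iff its label is ⊤). -/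
def satC {St A : Type} (L : St → A → TV) : LTL A → (ℕ → St) → Prop
  | .fls, _ => False
  | .atom a, π => L (π 0) a = TV.tt
  | .neg φ, π => ¬ satC L φ π
  | .conj φ ψ, π => satC L φ π ∧ satC L ψ π
  | .disj φ ψ, π => satC L φ π ∨ satC L ψ π
  | .next φ, π => satC L φ (shift π 1)
  | .untl φ ψ, π => ∃ j, satC L ψ (shift π j) ∧ ∀ i < j, satC L φ (shift π i)
  | .release φ ψ, π => ∀ j, satC L ψ (shift π j) ∨ ∃ i < j, satC L φ (shift π i)
  | .glob φ, π => ∀ j, satC L φ (shift π j)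

/-- `[M ⊨ φ] = ⊤` for a KS `M` under the classical semantics: every path
starting in an initial state satisfies `φ`. -/
def modelSatC {St A : Type} (M : PKS St A) (φ : LTL A) : Prop :=
  ∀ π, IsPath M π → π 0 ∈ M.S0 → satC M.L φ π

/-- The thorough LTL semantics `[M ⊨_T φ]`. -/
def modelSatT {St A : Type} (M : PKS St A) (φ : LTL A) : TV :=
  if ∀ M', IsCompletion M M' → modelSatC M' φ then TV.tt
  else if ∀ M', IsCompletion M M' → ¬ modelSatC M' φ then TV.ff
  else TV.uu

/-- Topological proof clauses for a PKS: propositional (TPP), transitions-from-state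
(TPT) and initial-states (TPI) clauses. -/
inductive TPClause (St A : Type) : Type
  | tpp (s : St) (a : A) (v : TV) : TPClause St A
  | tpt (s : St) (T : Set St) : TPClause St A
  | tpi (S0 : Set St) : TPClause St A

/-- A TP-clause is a TP-clause *for* `M` if its components live in `M`. -/
def ClauseFor {St A : Type} (M : PKS St A) : TPClause St A → Prop
  | .tpp s a _ => s ∈ M.S ∧ a ∈ M.AP
  | .tpt s T => s ∈ M.S ∧ T ⊆ M.S
  | .tpi S0 => S0 = M.S0

/-- `M'` is `Γ`-related to `M`. -/
def GammaRelated {St A : Type} (Γ : Set (TPClause St A)) (M M' : PKS St A) : Prop :=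
  M.AP ⊆ M'.AP ∧
  (∀ s a v, TPClause.tpp s a v ∈ Γ → v = M'.L s a) ∧
  (∀ s T, TPClause.tpt s T ∈ Γ → T = {s' | s' ∈ M'.S ∧ (s, s') ∈ M'.R}) ∧
  (∀ S0, TPClause.tpi S0 ∈ Γ → S0 = M'.S0)

/-- `Ω` is an `x`-topological proof (`x`-TP) for `φ` in `M`:
`[M ⊨₃ φ] = x` and every `Ω`-related PKS has value ≥ x. -/
def IsXTP {St A : Type} (Ω : Set (TPClause St A)) (M : PKS St A) (φ : LTL A) (x : TV) : Prop :=
  modelSat3 M φ = x ∧ ∀ M' : PKS St A, GammaRelated Ω M M' → x ≤ modelSat3 M' φ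

/-- `M'` is an `Ω_x`-revision of `M`: `M'` is `Ω`-related to `M`
(where `Ω` is an `x`-TP for the property of interest in `M`). -/
def OmegaRevision {St A : Type} (Ω : Set (TPClause St A)) (M M' : PKS St A) : Prop :=
  GammaRelated Ω M M'

/-! ### Complement closure, approximations, and `⊨*` -/

/-- The complement-closed version `M_c` of `M`: atomic propositions
`AP_c = AP ∪ {ᾱ | α ∈ AP}` (`.inl α` is `α`, `.inr α` is `ᾱ`). -/
def PKS.compClosed {St A : Type} (M : PKS St A) : PKS St (A ⊕ A) where
  S := M.S
  R := M.R
  S0 := M.S0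
  AP := Sum.inl '' M.AP ∪ Sum.inr '' M.AP
  L := fun s x => Sum.rec (fun a => M.L s a) (fun a => TV.comp (M.L s a)) x
  R_dom := M.R_dom
  leftTotal := M.leftTotal
  S0_sub := M.S0_sub

/-- The pessimistic approximation `M_pes` (every `?` becomes ⊥). -/
def PKS.pes {St A : Type} (M : PKS St A) : PKS St (A ⊕ A) :=
  { M.compClosed with
    L := fun s x => if M.compClosed.L s x = TV.uu then TV.ff else M.compClosed.L s x }

/-- The optimistic approximation `M_opt` (every `?` becomes ⊤). -/
def PKS.opt {St A : Type} (M : PKS St A) : PKS St (A ⊕ A) :=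
  { M.compClosed with
    L := fun s x => if M.compClosed.L s x = TV.uu then TV.tt else M.compClosed.L s x }

mutual
/-- Negation normal form of `φ` over complement-closed propositions
(`¬α` becomes `ᾱ = .inr α`). -/
def normPos {A : Type} : LTL A → LTL (A ⊕ A)
  | .fls => .fls
  | .atom a => .atom (.inl a)
  | .neg φ => normNeg φ
  | .conj φ ψ => .conj (normPos φ) (normPos ψ)
  | .disj φ ψ => .disj (normPos φ) (normPos ψ)
  | .next φ => .next (normPos φ)
  | .untl φ ψ => .untl (normPos φ) (normPos ψ)
  | .release φ ψ => .release (normPos φ) (normPos ψ)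
  | .glob φ => .glob (normPos φ)

/-- `normNeg φ` is `norm(φ)`: the negation normal form of `¬φ`, with negated
atoms `¬α` replaced by the complement-closed propositions `ᾱ = .inr α`. -/
def normNeg {A : Type} : LTL A → LTL (A ⊕ A)
  | .fls => .neg .fls
  | .atom a => .atom (.inr a)
  | .neg φ => normPos φ
  | .conj φ ψ => .disj (normNeg φ) (normNeg ψ)
  | .disj φ ψ => .conj (normNeg φ) (normNeg ψ)
  | .next φ => .next (normNeg φ)
  | .untl φ ψ => .release (normNeg φ) (normNeg ψ)
  | .release φ ψ => .untl (normNeg φ) (normNeg ψ)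
  | .glob φ => .untl (.neg .fls) (normNeg φ)
end

/-- `A ⊨* φ` for a KS `A` over complement-closed propositions: no path of `A`
starting in an initial state satisfies `norm(φ)` under classical semantics. -/
def satStar {St A : Type} (K : PKS St (A ⊕ A)) (φ : LTL A) : Prop :=
  ∀ π, IsPath K π → π 0 ∈ K.S0 → ¬ satC K.L (normNeg φ) π

/-! ### SNF encoding of a KS -/

/-- Finite syntactic disjunction of a finite set of formulae. -/
def bigOr {B C : Type} (T : Finset C) (f : C → LTL B) : LTL B :=
  (T.toList.map f).foldr LTL.disj LTL.fls

/-- The SNF initial clause `c_i = ⋁_{s ∈ S₀} p(s)`. State propositions `p(s)`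
are encoded as `.inr s`, ordinary propositions as `.inl p`. -/
def ciClause {St P : Type} [Fintype St] (K : PKS St P) : LTL (P ⊕ St) :=
  bigOr K.S0.toFinite.toFinset (fun s => LTL.atom (Sum.inr s))

/-- The SNF clause `G(¬p(s) ∨ X(⋁_{(s,s') ∈ R} p(s')))`. -/
def crClause {St P : Type} [Fintype St] (K : PKS St P) (s : St) : LTL (P ⊕ St) :=
  .glob (.disj (.neg (.atom (Sum.inr s)))
    (.next (bigOr {s' | (s, s') ∈ K.R}.toFinite.toFinset (fun s' => LTL.atom (Sum.inr s')))))

/-- The SNF clause `G(¬p(s) ∨ α)`. -/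
def clT {St P : Type} (s : St) (p : P) : LTL (P ⊕ St) :=
  .glob (.disj (.neg (.atom (Sum.inr s))) (.atom (Sum.inl p)))

/-- The SNF clause `G(¬p(s) ∨ ¬α)`. -/
def clF {St P : Type} (s : St) (p : P) : LTL (P ⊕ St) :=
  .glob (.disj (.neg (.atom (Sum.inr s))) (.neg (.atom (Sum.inl p))))

/-- The SNF clause `G(¬p(s) ∨ ¬p(s'))`. -/
def cregClause {St P : Type} (s s' : St) : LTL (P ⊕ St) :=
  .glob (.disj (.neg (.atom (Sum.inr s))) (.neg (.atom (Sum.inr s'))))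

/-- The clause set `C_KS = {c_i} ∪ CR ∪ CL_⊤ ∪ CL_⊥` encoding a KS. -/
def CKSset {St P : Type} [Fintype St] (K : PKS St P) : Set (LTL (P ⊕ St)) :=
  {ciClause K} ∪
  {f | ∃ s ∈ K.S, f = crClause K s} ∪
  {f | ∃ s ∈ K.S, ∃ p ∈ K.AP, K.L s p = TV.tt ∧ f = clT s p} ∪
  {f | ∃ s ∈ K.S, ∃ p ∈ K.AP, K.L s p = TV.ff ∧ f = clF s p}

/-- The clause set `C_REG = {G(¬p(s) ∨ ¬p(s')) | s, s' ∈ S, s ≠ s'}`. -/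
def CREGset {St P : Type} (K : PKS St P) : Set (LTL (P ⊕ St)) :=
  {f | ∃ s ∈ K.S, ∃ s' ∈ K.S, s ≠ s' ∧ f = cregClause s s'}

/-- The SNF encoding `C_A = C_KS ∪ C_REG` of a KS. -/
def CAset {St P : Type} [Fintype St] (K : PKS St P) : Set (LTL (P ⊕ St)) :=
  CKSset K ∪ CREGset K

/-- Suffix of an infinite word. -/
def shiftW {B : Type} (σ : ℕ → Set B) (k : ℕ) : ℕ → Set B := fun n => σ (n + k)

/-- Standard LTL satisfaction over infinite words over subsets of `B`. -/
def satW {B : Type} : LTL B → (ℕ → Set B) → Prop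
  | .fls, _ => False
  | .atom a, σ => a ∈ σ 0
  | .neg φ, σ => ¬ satW φ σ
  | .conj φ ψ, σ => satW φ σ ∧ satW ψ σ
  | .disj φ ψ, σ => satW φ σ ∨ satW ψ σ
  | .next φ, σ => satW φ (shiftW σ 1)
  | .untl φ ψ, σ => ∃ j, satW ψ (shiftW σ j) ∧ ∀ i < j, satW φ (shiftW σ i)
  | .release φ ψ, σ => ∀ j, satW ψ (shiftW σ j) ∨ ∃ i < j, satW φ (shiftW σ i)
  | .glob φ, σ => ∀ j, satW φ (shiftW σ j)

/-- A word satisfies a set `C` of clauses iff it satisfies `η(C) = ⋀_{c ∈ C} c`. -/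
def WordSatSet {B : Type} (σ : ℕ → Set B) (C : Set (LTL B)) : Prop :=
  ∀ c ∈ C, satW c σ

/-- A set of clauses is unsatisfiable iff `η(C)` has no model. -/
def UnsatSet {B : Type} (C : Set (LTL B)) : Prop :=
  ¬ ∃ σ : ℕ → Set B, WordSatSet σ C

/-- The set of TP-clauses extracted from a set `C'` of SNF clauses of the
encoding of an approximation `K` of `M` (rules of the extraction table). -/
def extractTP {St A : Type} [Fintype St] (M : PKS St A) (K : PKS St (A ⊕ A))
    (C' : Set (LTL ((A ⊕ A) ⊕ St))) : Set (TPClause St A) :=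
  {c | (c = TPClause.tpi M.S0 ∧ ciClause K ∈ C')
    ∨ (∃ s : St, c = TPClause.tpt s {s' | (s, s') ∈ M.R} ∧ crClause K s ∈ C')
    ∨ (∃ s a, c = TPClause.tpp s a (M.L s a) ∧
        (clT s (Sum.inl a) ∈ C' ∨ clF s (Sum.inr a) ∈ C'))
    ∨ (∃ s a, c = TPClause.tpp s a (TV.comp (M.L s a)) ∧
        (clF s (Sum.inl a) ∈ C' ∨ clT s (Sum.inr a) ∈ C'))}

end

section AuxProof

/-- Information preservation of definite values. -/
abbrev InfoLe (v w : TV) : Prop := (v = TV.tt → w = TV.tt) ∧ (v = TV.ff → w = TV.ff)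

lemma tv_ff_bot : TV.ff = (⊥ : TV) := by decide
lemma tv_tt_top : TV.tt = (⊤ : TV) := by decide
lemma tv_ne_bot : ∀ v : TV, v ≠ ⊥ → 1 ≤ v := by decide
lemma tv_ne_top : ∀ v : TV, v ≠ ⊤ → v ≤ 1 := by decide
lemma tv_bot_ne_top : (⊥ : TV) ≠ ⊤ := by decide

lemma tv_iInf_eq_bot {ι : Sort*} {f : ι → TV} (h : (⨅ i, f i) = ⊥) : ∃ i, f i = ⊥ := by
  by_contra hc
  push_neg at hc
  have h1 : (1 : TV) ≤ ⨅ i, f i := le_iInf fun i => tv_ne_bot _ (hc i)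
  rw [h] at h1
  exact absurd h1 (by decide)

lemma tv_iSup_eq_top {ι : Sort*} {f : ι → TV} (h : (⨆ i, f i) = ⊤) : ∃ i, f i = ⊤ := by
  by_contra hc
  push_neg at hc
  have h1 : (⨆ i, f i) ≤ 1 := iSup_le fun i => tv_ne_top _ (hc i)
  rw [h] at h1
  exact absurd h1 (by decide)

lemma tv_biInf_eq_bot {ι : Sort*} {p : ι → Prop} {f : ι → TV}
    (h : (⨅ i, ⨅ _ : p i, f i) = ⊥) : ∃ i, p i ∧ f i = ⊥ := by
  obtain ⟨i, hi⟩ := tv_iInf_eq_bot h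
  by_cases hp : p i
  · exact ⟨i, hp, by rwa [iInf_pos hp] at hi⟩
  · rw [iInf_neg hp] at hi
    exact absurd hi.symm tv_bot_ne_top

lemma infoLe_comp : ∀ v w : TV, InfoLe v w → InfoLe v.comp w.comp := by decide
lemma infoLe_min : ∀ v₁ w₁ v₂ w₂ : TV, InfoLe v₁ w₁ → InfoLe v₂ w₂ →
    InfoLe (min v₁ v₂) (min w₁ w₂) := by decide
lemma infoLe_max : ∀ v₁ w₁ v₂ w₂ : TV, InfoLe v₁ w₁ → InfoLe v₂ w₂ →
    InfoLe (max v₁ v₂) (max w₁ w₂) := by decide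

lemma infoLe_iInf {ι : Sort*} {f g : ι → TV} (h : ∀ i, InfoLe (f i) (g i)) :
    InfoLe (⨅ i, f i) (⨅ i, g i) := by
  constructor
  · intro ht
    rw [tv_tt_top] at *
    rw [iInf_eq_top] at ht ⊢
    exact fun i => (h i).1 (ht i)
  · intro hb
    rw [tv_ff_bot] at *
    obtain ⟨i, hi⟩ := tv_iInf_eq_bot hb
    exact le_bot_iff.mp ((iInf_le _ i).trans (le_of_eq ((h i).2 hi)))

lemma infoLe_iSup {ι : Sort*} {f g : ι → TV} (h : ∀ i, InfoLe (f i) (g i)) :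
    InfoLe (⨆ i, f i) (⨆ i, g i) := by
  constructor
  · intro ht
    rw [tv_tt_top] at *
    obtain ⟨i, hi⟩ := tv_iSup_eq_top ht
    exact top_le_iff.mp ((le_of_eq ((h i).1 hi).symm).trans (le_iSup _ i))
  · intro hb
    rw [tv_ff_bot] at *
    rw [iSup_eq_bot] at hb ⊢
    exact fun i => (h i).2 (hb i)

lemma sat3_infoLe {St A : Type} (L L' : St → A → TV) (φ : LTL A) :
    ∀ π : ℕ → St, (∀ n, ∀ a ∈ φ.atoms, InfoLe (L (π n) a) (L' (π n) a)) →
      InfoLe (sat3 L φ π) (sat3 L' φ π) := by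
  induction φ with
  | fls => intro π _; exact ⟨fun h => h, fun h => h⟩
  | atom a => intro π hL; exact hL 0 a rfl
  | neg φ ih => intro π hL; exact infoLe_comp _ _ (ih π hL)
  | conj φ ψ ih₁ ih₂ =>
    intro π hL
    exact infoLe_min _ _ _ _
      (ih₁ π fun n a ha => hL n a (Set.mem_union_left _ ha))
      (ih₂ π fun n a ha => hL n a (Set.mem_union_right _ ha))
  | disj φ ψ ih₁ ih₂ =>
    intro π hL
    exact infoLe_max _ _ _ _
      (ih₁ π fun n a ha => hL n a (Set.mem_union_left _ ha))
      (ih₂ π fun n a ha => hL n a (Set.mem_union_right _ ha))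
  | next φ ih => intro π hL; exact ih (shift π 1) fun n a ha => hL (n + 1) a ha
  | untl φ ψ ih₁ ih₂ =>
    intro π hL
    refine infoLe_iSup fun j => infoLe_min _ _ _ _ ?_ ?_
    · exact infoLe_iInf fun i => infoLe_iInf fun _ =>
        ih₁ (shift π i) fun n a ha => hL (n + i) a (Set.mem_union_left _ ha)
    · exact ih₂ (shift π j) fun n a ha => hL (n + j) a (Set.mem_union_right _ ha)
  | release φ ψ ih₁ ih₂ =>
    intro π hL
    refine infoLe_iInf fun j => infoLe_max _ _ _ _ ?_ ?_
    · exact infoLe_iSup fun i => infoLe_iSup fun _ =>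
        ih₁ (shift π i) fun n a ha => hL (n + i) a (Set.mem_union_left _ ha)
    · exact ih₂ (shift π j) fun n a ha => hL (n + j) a (Set.mem_union_right _ ha)
  | glob φ ih =>
    intro π hL
    exact infoLe_iInf fun j => ih (shift π j) fun n a ha => hL (n + j) a ha

lemma tv_min_ite (P Q : Prop) [Decidable P] [Decidable Q] [Decidable (P ∧ Q)] :
    min (if P then (⊤ : TV) else ⊥) (if Q then (⊤ : TV) else ⊥)
      = if P ∧ Q then (⊤ : TV) else ⊥ := by
  by_cases hP : P <;> by_cases hQ : Q <;>
    simp only [if_pos, if_neg, hP, hQ, and_true, and_false, true_and, false_and,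
      if_true, if_false] <;> first | rfl | decide

lemma tv_max_ite (P Q : Prop) [Decidable P] [Decidable Q] [Decidable (P ∨ Q)] :
    max (if P then (⊤ : TV) else ⊥) (if Q then (⊤ : TV) else ⊥)
      = if P ∨ Q then (⊤ : TV) else ⊥ := by
  by_cases hP : P <;> by_cases hQ : Q <;>
    simp only [if_pos, if_neg, hP, hQ, or_true, or_false, true_or, false_or,
      if_true, if_false] <;> first | rfl | decide

lemma tv_inf_ite (P Q : Prop) [Decidable P] [Decidable Q] [Decidable (P ∧ Q)] :
    (if P then (⊤ : TV) else ⊥) ⊓ (if Q then (⊤ : TV) else ⊥)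
      = if P ∧ Q then (⊤ : TV) else ⊥ := tv_min_ite P Q

lemma tv_sup_ite (P Q : Prop) [Decidable P] [Decidable Q] [Decidable (P ∨ Q)] :
    (if P then (⊤ : TV) else ⊥) ⊔ (if Q then (⊤ : TV) else ⊥)
      = if P ∨ Q then (⊤ : TV) else ⊥ := tv_max_ite P Q

lemma tv_ite_congr {P Q : Prop} [Decidable P] [Decidable Q] (h : P ↔ Q) :
    (if P then (⊤ : TV) else ⊥) = if Q then (⊤ : TV) else ⊥ := by
  by_cases hp : P
  · rw [if_pos hp, if_pos (h.mp hp)]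
  · rw [if_neg hp, if_neg (fun hq => hp (h.mpr hq))]

lemma tv_comp_ite (P : Prop) [Decidable P] [Decidable (¬ P)] :
    TV.comp (if P then (⊤ : TV) else ⊥) = if ¬ P then (⊤ : TV) else ⊥ := by
  by_cases hP : P
  · rw [if_pos hP, if_neg (not_not_intro hP)]; decide
  · rw [if_neg hP, if_pos hP]; decide

lemma tv_iInf_ite {ι : Sort*} (P : ι → Prop) [∀ i, Decidable (P i)] [Decidable (∀ i, P i)] :
    (⨅ i, if P i then (⊤ : TV) else ⊥) = if ∀ i, P i then ⊤ else ⊥ := by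
  by_cases h : ∀ i, P i
  · rw [if_pos h, iInf_eq_top]
    intro i; rw [if_pos (h i)]
  · rw [if_neg h]
    push_neg at h
    obtain ⟨i, hi⟩ := h
    refine le_antisymm ((iInf_le _ i).trans ?_) bot_le
    rw [if_neg hi]

lemma tv_iSup_ite {ι : Sort*} (P : ι → Prop) [∀ i, Decidable (P i)] [Decidable (∃ i, P i)] :
    (⨆ i, if P i then (⊤ : TV) else ⊥) = if ∃ i, P i then ⊤ else ⊥ := by
  by_cases h : ∃ i, P i
  · rw [if_pos h]
    obtain ⟨i, hi⟩ := h
    refine le_antisymm le_top (le_trans ?_ (le_iSup _ i))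
    rw [if_pos hi]
  · rw [if_neg h]
    push_neg at h
    rw [iSup_eq_bot]
    intro i; rw [if_neg (h i)]

lemma tv_biInf_range_ite (C : ℕ → Prop) (j : ℕ) [∀ i, Decidable (C i)] [Decidable (∀ i < j, C i)] :
    (⨅ i ∈ Finset.range j, if C i then (⊤ : TV) else ⊥) = if ∀ i < j, C i then ⊤ else ⊥ := by
  by_cases h : ∀ i < j, C i
  · rw [if_pos h, eq_top_iff]
    refine le_iInf fun i => le_iInf fun hi => ?_
    rw [if_pos (h i (Finset.mem_range.mp hi))]
  · rw [if_neg h]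
    push_neg at h
    obtain ⟨i, hij, hi⟩ := h
    refine le_antisymm (le_trans (iInf₂_le i (Finset.mem_range.mpr hij)) ?_) bot_le
    rw [if_neg hi]

lemma tv_biSup_range_ite (C : ℕ → Prop) (j : ℕ) [∀ i, Decidable (C i)] [Decidable (∃ i < j, C i)] :
    (⨆ i ∈ Finset.range j, if C i then (⊤ : TV) else ⊥) = if ∃ i < j, C i then ⊤ else ⊥ := by
  by_cases h : ∃ i < j, C i
  · rw [if_pos h]
    obtain ⟨i, hij, hi⟩ := h
    refine le_antisymm le_top (le_trans ?_ (le_iSup₂ i (Finset.mem_range.mpr hij)))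
    rw [if_pos hi]
  · rw [if_neg h]
    push_neg at h
    refine le_antisymm ?_ bot_le
    refine iSup_le fun i => iSup_le fun hi => ?_
    rw [if_neg (h i (Finset.mem_range.mp hi))]

lemma sat3_eq_classical {St A : Type} (L : St → A → TV) (φ : LTL A) :
    ∀ π : ℕ → St, (∀ n, ∀ a ∈ φ.atoms, L (π n) a ≠ TV.uu) →
      sat3 L φ π = if satC L φ π then ⊤ else ⊥ := by
  induction φ with
  | fls =>
    intro π _
    rw [if_neg (show ¬ satC L .fls π from fun hf => hf)]
    exact tv_ff_bot
  | atom a =>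
    intro π hdef
    have h2 : L (π 0) a ≠ TV.uu := hdef 0 a rfl
    by_cases hc : satC L (.atom a) π
    · rw [if_pos hc]
      have ht : L (π 0) a = TV.tt := hc
      show L (π 0) a = ⊤
      rw [ht, tv_tt_top]
    · rw [if_neg hc]
      have hnt : L (π 0) a ≠ TV.tt := hc
      have hf : L (π 0) a = TV.ff := by
        rcases (by omega : (L (π 0) a).val = 0 ∨ (L (π 0) a).val = 1 ∨ (L (π 0) a).val = 2)
          with hv | hv | hv
        · exact Fin.ext hv
        · exact absurd (Fin.ext hv) h2
        · exact absurd (Fin.ext hv) hnt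
      show L (π 0) a = ⊥
      rw [hf, tv_ff_bot]
  | neg φ ih =>
    intro π hdef
    show TV.comp (sat3 L φ π) = if satC L φ.neg π then ⊤ else ⊥
    rw [ih π hdef]
    by_cases hc : satC L φ π
    · rw [if_pos hc, if_neg (show ¬ satC L φ.neg π from fun hn => hn hc)]
      decide
    · rw [if_neg hc, if_pos (show satC L φ.neg π from hc)]
      decide
  | conj φ ψ ih₁ ih₂ =>
    intro π hdef
    show min (sat3 L φ π) (sat3 L ψ π) = if satC L (φ.conj ψ) π then ⊤ else ⊥
    rw [ih₁ π fun n a ha => hdef n a (Set.mem_union_left _ ha),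
      ih₂ π fun n a ha => hdef n a (Set.mem_union_right _ ha), tv_min_ite]
    exact tv_ite_congr Iff.rfl
  | disj φ ψ ih₁ ih₂ =>
    intro π hdef
    show max (sat3 L φ π) (sat3 L ψ π) = if satC L (φ.disj ψ) π then ⊤ else ⊥
    rw [ih₁ π fun n a ha => hdef n a (Set.mem_union_left _ ha),
      ih₂ π fun n a ha => hdef n a (Set.mem_union_right _ ha), tv_max_ite]
    exact tv_ite_congr Iff.rfl
  | next φ ih =>
    intro π hdef
    exact ih (shift π 1) fun n a ha => hdef (n + 1) a ha
  | untl φ ψ ih₁ ih₂ =>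
    intro π hdef
    have hφ : ∀ i, sat3 L φ (shift π i) = if satC L φ (shift π i) then (⊤ : TV) else ⊥ :=
      fun i => ih₁ (shift π i) fun n a ha => hdef (n + i) a (Set.mem_union_left _ ha)
    have hψ : ∀ j, sat3 L ψ (shift π j) = if satC L ψ (shift π j) then (⊤ : TV) else ⊥ :=
      fun j => ih₂ (shift π j) fun n a ha => hdef (n + j) a (Set.mem_union_right _ ha)
    show (⨆ j : ℕ, min (⨅ i ∈ Finset.range j, sat3 L φ (shift π i)) (sat3 L ψ (shift π j)))
      = if satC L (φ.untl ψ) π then ⊤ else ⊥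
    simp only [hφ, hψ, tv_biInf_range_ite, tv_min_ite, tv_inf_ite, tv_iSup_ite]
    refine tv_ite_congr ?_
    show (∃ j, (∀ i < j, satC L φ (shift π i)) ∧ satC L ψ (shift π j)) ↔
      ∃ j, satC L ψ (shift π j) ∧ ∀ i < j, satC L φ (shift π i)
    exact exists_congr fun j => and_comm
  | release φ ψ ih₁ ih₂ =>
    intro π hdef
    have hφ : ∀ i, sat3 L φ (shift π i) = if satC L φ (shift π i) then (⊤ : TV) else ⊥ :=
      fun i => ih₁ (shift π i) fun n a ha => hdef (n + i) a (Set.mem_union_left _ ha)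
    have hψ : ∀ j, sat3 L ψ (shift π j) = if satC L ψ (shift π j) then (⊤ : TV) else ⊥ :=
      fun j => ih₂ (shift π j) fun n a ha => hdef (n + j) a (Set.mem_union_right _ ha)
    show (⨅ j : ℕ, max (⨆ i ∈ Finset.range j, sat3 L φ (shift π i)) (sat3 L ψ (shift π j)))
      = if satC L (φ.release ψ) π then ⊤ else ⊥
    simp only [hφ, hψ, tv_biSup_range_ite, tv_max_ite, tv_sup_ite, tv_iInf_ite]
    refine tv_ite_congr ?_
    show (∀ j, (∃ i < j, satC L φ (shift π i)) ∨ satC L ψ (shift π j)) ↔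
      ∀ j, satC L ψ (shift π j) ∨ ∃ i < j, satC L φ (shift π i)
    exact forall_congr' fun j => or_comm
  | glob φ ih =>
    intro π hdef
    have hφ : ∀ j, sat3 L φ (shift π j) = if satC L φ (shift π j) then (⊤ : TV) else ⊥ :=
      fun j => ih (shift π j) fun n a ha => hdef (n + j) a ha
    show (⨅ j : ℕ, sat3 L φ (shift π j)) = if satC L φ.glob π then ⊤ else ⊥
    simp only [hφ, tv_iInf_ite]
    exact tv_ite_congr Iff.rfl

/-- A canonical completion of a PKS: every `?` becomes `⊤`. -/
def canonicalCompletion {St A : Type} (M : PKS St A) : PKS St A :=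
  { M with L := fun s a => if M.L s a = TV.uu then TV.tt else M.L s a }

lemma canonicalCompletion_isCompletion {St A : Type} (M : PKS St A) :
    IsCompletion M (canonicalCompletion M) := by
  constructor
  · refine ⟨rfl, rfl, rfl, rfl, fun s _ a _ => ⟨fun h => ?_, fun h => ?_⟩⟩
    · show (if M.L s a = TV.uu then TV.tt else M.L s a) = TV.tt
      rw [h, if_neg (show TV.tt ≠ TV.uu by decide)]
    · show (if M.L s a = TV.uu then TV.tt else M.L s a) = TV.ff
      rw [h, if_neg (show TV.ff ≠ TV.uu by decide)]
  · intro s _ a _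
    show (if M.L s a = TV.uu then TV.tt else M.L s a) ≠ TV.uu
    split
    · decide
    · assumption

end AuxProof

/-- If `[M ⊨₃ φ] = ⊥` then `[M ⊨_T φ] = ⊥`; that is, every completion
`M'` of `M` satisfies `[M' ⊨ φ] = ⊥` under classical LTL semantics. -/
theorem three_valued_false_implies_thorough_false {St A : Type} (M : PKS St A) (φ : LTL A)
    (hatoms : φ.atoms ⊆ M.AP)
    (h : modelSat3 M φ = TV.ff) :
    modelSatT M φ = TV.ff ∧ ∀ M' : PKS St A, IsCompletion M M' → ¬ modelSatC M' φ := by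
  -- Extract a falsifying path of M
  have hb : (⨅ s, ⨅ _ : s ∈ M.S0, stateSat3 M s φ) = ⊥ := by
    rw [← tv_ff_bot, ← h]; rfl
  obtain ⟨s, hs0, hstate⟩ := tv_biInf_eq_bot hb
  have hstate' : (⨅ π, ⨅ _ : π ∈ {π : ℕ → St | IsPath M π ∧ π 0 = s}, sat3 M.L φ π) = ⊥ :=
    hstate
  obtain ⟨π, ⟨hpath, hπ0⟩, hsat3⟩ := tv_biInf_eq_bot hstate'
  have hS : ∀ n, π n ∈ M.S := by
    intro n
    induction n with
    | zero => rw [hπ0]; exact M.S0_sub hs0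
    | succ n _ => exact (M.R_dom _ (hpath n)).2
  have hmain : ∀ M' : PKS St A, IsCompletion M M' → ¬ modelSatC M' φ := by
    rintro M' ⟨⟨refS, refR, refS0, refAP, refL⟩, hks⟩ hsat
    have hdef : ∀ n, ∀ a ∈ φ.atoms, M'.L (π n) a ≠ TV.uu := by
      intro n a ha
      exact hks (π n) (refS ▸ hS n) a (refAP ▸ hatoms ha)
    have hinfo : InfoLe (sat3 M.L φ π) (sat3 M'.L φ π) :=
      sat3_infoLe M.L M'.L φ π fun n a ha => refL (π n) (hS n) a (hatoms ha)
    have hff : sat3 M'.L φ π = TV.ff := hinfo.2 (by rw [tv_ff_bot]; exact hsat3)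
    have hcl : sat3 M'.L φ π = if satC M'.L φ π then ⊤ else ⊥ :=
      sat3_eq_classical M'.L φ π hdef
    have hsatC : satC M'.L φ π := by
      apply hsat π
      · intro i; rw [refR]; exact hpath i
      · rw [refS0, hπ0]; exact hs0
    rw [hff, tv_ff_bot, if_pos hsatC] at hcl
    exact tv_bot_ne_top hcl
  refine ⟨?_, hmain⟩
  rw [modelSatT, if_neg, if_pos hmain]
  intro hall
  exact hmain _ (canonicalCompletion_isCompletion M)
    (hall _ (canonicalCompletion_isCompletion M))
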